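/- arXiv:2109.02107 — 4 statements merged into one kernel-verified Lean document; each statement's English description precedes it below -/
import Mathlib

section
/- Define the linear map L sending a pair (f, g), where f is a formal power series in x and g a formal power series in (x,y), to the formal power series L(f,g)(x,y,p) = g_{xx} + (2 g_{xy} − f_{xx}) p + g_{yy} p² in (x,y,p). If (f,g) ∈ ker L and f has vanishing coefficients in degrees 0 and 1 while g has vanishing coefficients for the monomials 1, x, y, xy, then f = 0 and g = 0. (Injectivity of L on the subspace F'.) -/
/-!
A kernel element has `g_{xx} = g_{yy} = 0`, so `g` is a combination of `1, x, y, xy`;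
on `F'` all four coefficients vanish, hence `g = 0`. The `p`-coefficient then reads
`f_{xx} = 0`, and `f = O(x²)` forces `f = 0`.
-/

lemma eq_zero_of_succ_mul_succ_succ_mul_eq_zero {n : ℕ} {a : ℝ}
    (h : ((n : ℝ) + 1) * ((n : ℝ) + 2) * a = 0) : a = 0 :=
  (mul_eq_zero_iff_left (by positivity)).mp h

lemma eq_zero_of_bidegree_le_one {M : Type*} [Zero M] {g : ℕ → ℕ → M}
    (h00 : g 0 0 = 0) (h10 : g 1 0 = 0) (h01 : g 0 1 = 0) (h11 : g 1 1 = 0)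
    (hx : ∀ i j, g (i + 2) j = 0) (hy : ∀ i j, g i (j + 2) = 0) :
    ∀ i j, g i j = 0
  | 0, 0 => h00
  | 1, 0 => h10
  | 0, 1 => h01
  | 1, 1 => h11
  | i + 2, j => hx i j
  | 0, j + 2 => hy 0 j
  | 1, j + 2 => hy 1 j

/-- `f n` is the coefficient of `x^n` in `f`, `g i j` that of `x^i y^j` in `g`; `hker0`, `hker1`,
`hker2` say that the coefficient of `x^i y^j p^k` in `L(f,g)` vanishes for `k = 0, 1, 2`. -/
theorem statement3 (f : ℕ → ℝ) (g : ℕ → ℕ → ℝ)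
    (hf0 : f 0 = 0) (hf1 : f 1 = 0)
    (hg00 : g 0 0 = 0) (hg10 : g 1 0 = 0) (hg01 : g 0 1 = 0) (hg11 : g 1 1 = 0)
    (hker0 : ∀ i j : ℕ, ((i : ℝ) + 1) * ((i : ℝ) + 2) * g (i + 2) j = 0)
    (hker1 : ∀ i j : ℕ,
      2 * ((i : ℝ) + 1) * ((j : ℝ) + 1) * g (i + 1) (j + 1)
        - (if j = 0 then ((i : ℝ) + 1) * ((i : ℝ) + 2) * f (i + 2) else 0) = 0)
    (hker2 : ∀ i j : ℕ, ((j : ℝ) + 1) * ((j : ℝ) + 2) * g i (j + 2) = 0) :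
    (∀ n, f n = 0) ∧ (∀ i j, g i j = 0) := by
  have hg : ∀ i j, g i j = 0 := eq_zero_of_bidegree_le_one hg00 hg10 hg01 hg11
    (fun i j => eq_zero_of_succ_mul_succ_succ_mul_eq_zero (hker0 i j))
    (fun i j => eq_zero_of_succ_mul_succ_succ_mul_eq_zero (hker2 i j))
  refine ⟨fun n => ?_, hg⟩
  match n with
  | 0 => exact hf0
  | 1 => exact hf1
  | n + 2 =>
    have hfxx := hker1 n 0
    simp only [hg (n + 1) 1, mul_zero, zero_sub, neg_eq_zero] at hfxx
    exact eq_zero_of_succ_mul_succ_succ_mul_eq_zero hfxx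
end

section
/- Let M, N ∈ ℝ[[x,y]] be formal power series with M(0,y) = 0, N(x,0) = 0, N(0,y) = 0, satisfying 2 M_x = N_y and N_{xy} = N_y N. Then M = 0 and N = 0. -/
/-!
Expand `N = ∑ Nₖ(y) xᵏ`. The `xᵏ` coefficient of `N_{xy} = N_y N` reads
`(k + 1) N'ₖ₊₁ = ∑_{i + j = k} N'ᵢ Nⱼ`, so once `N₀, …, Nₖ` vanish, `Nₖ₊₁` is constant in `y`,
hence zero because `N(x, 0) = 0`. With `N = 0` we get `M_x = 0`, so `M = M(0, y) = 0`.
-/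

/-- Formal derivative `d/dy` on `ℝ[[y]]`. -/
noncomputable def dy (F : PowerSeries ℝ) : PowerSeries ℝ :=
  PowerSeries.mk fun n => ((n : ℝ) + 1) * PowerSeries.coeff (R := ℝ) (n + 1) F

/-- `ℝ[[x,y]]` viewed as `(ℝ[[y]])[[x]]`: partial derivative `∂/∂y`. -/
noncomputable def Dy (N : PowerSeries (PowerSeries ℝ)) : PowerSeries (PowerSeries ℝ) :=
  PowerSeries.mk fun k => dy (PowerSeries.coeff (R := PowerSeries ℝ) k N)

/-- `ℝ[[x,y]]` viewed as `(ℝ[[y]])[[x]]`: partial derivative `∂/∂x`. -/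
noncomputable def Dx (N : PowerSeries (PowerSeries ℝ)) : PowerSeries (PowerSeries ℝ) :=
  PowerSeries.mk fun k =>
    ((k + 1 : ℕ) : PowerSeries ℝ) * PowerSeries.coeff (R := PowerSeries ℝ) (k + 1) N

open PowerSeries

instance PowerSeries.instCharZero {R : Type*} [CommSemiring R] [CharZero R] : CharZero R⟦X⟧ :=
  charZero_of_injective_ringHom C_injective

theorem PowerSeries.eq_zero_of_derivative_eq_zero {R : Type*} [CommRing R] [IsAddTorsionFree R]
    {f : R⟦X⟧} (hd : d⁄dX R f = 0) (hc : constantCoeff f = 0) : f = 0 :=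
  derivative.ext (by rw [hd, map_zero]) (by rw [hc, map_zero])

theorem dy_eq_derivative : dy = d⁄dX ℝ := by
  funext F
  ext n
  simp [dy, coeff_derivative, mul_comm]

theorem Dx_eq_derivative : Dx = d⁄dX ℝ⟦X⟧ := by
  funext N
  ext1 k
  simp [Dx, coeff_derivative, mul_comm]

theorem coeff_Dy (N : ℝ⟦X⟧⟦X⟧) (k : ℕ) : coeff k (Dy N) = d⁄dX ℝ (coeff k N) := by
  simp [Dy, dy_eq_derivative]

theorem Dy_zero : Dy 0 = 0 := by
  ext1 k
  simp [coeff_Dy]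

theorem eq_zero_of_Dx_Dy_eq_Dy_mul {N : ℝ⟦X⟧⟦X⟧} (hN0 : coeff 0 N = 0)
    (hNx0 : ∀ k, constantCoeff (coeff k N) = 0) (h : Dx (Dy N) = Dy N * N) : N = 0 := by
  suffices ∀ k, ∀ j ≤ k, coeff j N = 0 by
    ext1 k
    simpa using this k k le_rfl
  intro k
  induction k with
  | zero =>
    intro j hj
    rwa [Nat.le_zero.mp hj]
  | succ k ih =>
    intro j hj
    rcases Nat.le_succ_iff.mp hj with hj | rfl
    · exact ih j hj
    have hrhs : coeff k (Dy N * N) = 0 := by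
      rw [coeff_mul]
      refine Finset.sum_eq_zero fun p hp => ?_
      rw [ih p.2 (Finset.HasAntidiagonal.antidiagonal.snd_le hp), mul_zero]
    have hderiv : d⁄dX ℝ (coeff (k + 1) N) = 0 := by
      have hk := congrArg (coeff k) h
      rw [hrhs, Dx_eq_derivative, coeff_derivative, coeff_Dy] at hk
      simpa [Nat.cast_add_one_ne_zero] using hk
    exact eq_zero_of_derivative_eq_zero hderiv (hNx0 (k + 1))

/-- if `M, N ∈ ℝ[[x,y]]` satisfy `M(0,y) = 0`, `N(x,0) = 0`,
`N(0,y) = 0`, `2 M_x = N_y` and `N_{xy} = N_y N`, then `M = 0` and `N = 0`. -/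
theorem statement7 (M N : PowerSeries (PowerSeries ℝ))
    (hM0 : PowerSeries.coeff (R := PowerSeries ℝ) 0 M = 0)
    (hNx0 : ∀ k : ℕ,
      PowerSeries.constantCoeff (R := ℝ) (PowerSeries.coeff (R := PowerSeries ℝ) k N) = 0)
    (hN0 : PowerSeries.coeff (R := PowerSeries ℝ) 0 N = 0)
    (heq1 : 2 * Dx M = Dy N)
    (heq2 : Dx (Dy N) = Dy N * N) :
    M = 0 ∧ N = 0 := by
  have hN : N = 0 := eq_zero_of_Dx_Dy_eq_Dy_mul hN0 hNx0 heq2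
  refine ⟨?_, hN⟩
  rw [hN, Dy_zero, Dx_eq_derivative, mul_eq_zero] at heq1
  exact eq_zero_of_derivative_eq_zero (heq1.resolve_left two_ne_zero) (by simpa using hM0)
end

section
/- Consider the formal homological equation: given J ∈ ℝ[[x,y,p]] written as J = Σ_{i,j} J_{i,j}(y) x^i p^j, there exists a unique pair (f, g) with f(x) = Σ_{j≥2} f_j x^j ∈ ℝ[[x]] and g(x,y) = Σ_{j≥0} g_j(y) x^j ∈ ℝ[[x,y]] satisfying g_0(0) = g_0'(0) = 0, g_1(0) = g_1'(0) = 0, such that K := J + g_{xx} + (2g_{xy} − f_{xx})p + g_{yy}p² satisfies: K_{i,0}(y) = 0 for all i ≥ 0; K_{0,1}(y) = 0; K_{i,1}(0) = 0 for all i ≥ 1; and K_{0,2}(y) = 0. -/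
open PowerSeries

lemma coeff_dy (F : ℝ⟦X⟧) (n : ℕ) : coeff n (dy F) = (n + 1) * coeff (n + 1) F := by
  simp [dy]

lemma constantCoeff_dy (F : ℝ⟦X⟧) : constantCoeff (dy F) = coeff 1 F := by
  simpa using coeff_dy F 0

noncomputable def antideriv (G : ℝ⟦X⟧) : ℝ⟦X⟧ :=
  mk fun
    | 0 => 0
    | n + 1 => coeff n G / (n + 1)

lemma eq_antideriv_iff {F G : ℝ⟦X⟧} : F = antideriv G ↔ constantCoeff F = 0 ∧ dy F = G := by
  simp only [PowerSeries.ext_iff, ← coeff_zero_eq_constantCoeff_apply, coeff_dy]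
  constructor
  · intro h
    refine ⟨by simp [h, antideriv], fun n => ?_⟩
    rw [h]
    simp only [antideriv, coeff_mk]
    field_simp
  · rintro ⟨h0, h⟩ (_ | n)
    · simp [h0, antideriv]
    · simp only [antideriv, coeff_mk, ← h n]
      field_simp

lemma add_smul_eq_zero_iff_eq_inv_smul_neg {K M : Type*} [DivisionRing K] [AddCommGroup M]
    [Module K M] {c : K} (hc : c ≠ 0) {x y : M} : x + c • y = 0 ↔ y = c⁻¹ • -x := by
  rw [add_eq_zero_iff_eq_neg', eq_inv_smul_iff₀ hc]

lemma constantCoeff_add_smul_dy_sub_C_eq_zero_iff {a c f : ℝ} (hc : c ≠ 0) {A G : ℝ⟦X⟧} :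
    constantCoeff (A + a • dy G - C (c * f)) = 0 ↔ f = (constantCoeff A + a * coeff 1 G) / c := by
  rw [eq_div_iff hc]
  simp only [map_sub, map_add, constantCoeff_smul, constantCoeff_dy, smul_eq_mul,
    constantCoeff_C]
  constructor <;> intro h <;> linarith

lemma add_smul_dy_sub_C_eq_zero_iff {a b : ℝ} (ha : a ≠ 0) {A G : ℝ⟦X⟧} :
    (constantCoeff (dy G) = 0 ∧ A + a • dy G - C b = 0) ↔
      b = constantCoeff A ∧ dy G = a⁻¹ • (C (constantCoeff A) - A) := by
  constructor
  · rintro ⟨hG, h⟩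
    obtain rfl : b = constantCoeff A := by
      have h0 := congrArg constantCoeff h
      simp only [map_add, map_sub, constantCoeff_smul, hG, constantCoeff_C, smul_zero,
        map_zero] at h0
      linarith
    refine ⟨rfl, ?_⟩
    rw [eq_inv_smul_iff₀ ha]
    linear_combination (norm := module) h
  · rintro ⟨rfl, hG⟩
    rw [hG, smul_inv_smul₀ ha]
    simp

lemma eq_antideriv_antideriv_neg_iff {F G : ℝ⟦X⟧} :
    F = antideriv (antideriv (-G)) ↔
      constantCoeff F = 0 ∧ constantCoeff (dy F) = 0 ∧ G + dy (dy F) = 0 := by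
  rw [eq_antideriv_iff, eq_antideriv_iff, add_eq_zero_iff_eq_neg']

noncomputable def solutionG (J : ℕ → ℕ → ℝ⟦X⟧) : ℕ → ℝ⟦X⟧
  | 0 => antideriv (antideriv (-J 0 2))
  | 1 => antideriv ((2 : ℝ)⁻¹ • (C (constantCoeff (J 0 1)) - J 0 1))
  | i + 2 => (((i : ℝ) + 1) * ((i : ℝ) + 2))⁻¹ • -J i 0

noncomputable def solutionF (J : ℕ → ℕ → ℝ⟦X⟧) : ℕ → ℝ
  | 0 => 0
  | 1 => 0
  | i + 2 => (constantCoeff (J i 1) + 2 * ((i : ℝ) + 1) * coeff 1 (solutionG J (i + 1))) /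
      (2 * ((i : ℝ) + 1) * ((i : ℝ) + 2))

lemma dy_solutionG_one (J : ℕ → ℕ → ℝ⟦X⟧) :
    dy (solutionG J 1) = (2 : ℝ)⁻¹ • (C (constantCoeff (J 0 1)) - J 0 1) :=
  (eq_antideriv_iff.mp rfl).2

lemma four_mul_solutionF_two (J : ℕ → ℕ → ℝ⟦X⟧) :
    4 * solutionF J 2 = constantCoeff (J 0 1) := by
  have hg1 : coeff 1 (solutionG J 1) = 0 := by
    rw [← constantCoeff_dy, dy_solutionG_one]
    simp
  simp only [solutionF, CharP.cast_eq_zero, zero_add, mul_one, hg1, mul_zero, add_zero]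
  ring

/-- the formal homological equation.  A series
`J = Σ J_{i,j}(y) x^i p^j ∈ ℝ[[x,y,p]]` is encoded by the family
`J : ℕ → ℕ → ℝ[[y]]`, a pair `(f,g)` with `f = Σ_{j≥2} f_j x^j` and
`g = Σ g_j(y) x^j` by `fg : (ℕ → ℝ) × (ℕ → ℝ[[y]])` with `f 0 = f 1 = 0`.
The transformed series `K := J + g_{xx} + (2 g_{xy} - f_{xx}) p + g_{yy} p²`
has `K_{i,0} = J_{i,0} + (i+1)(i+2) g_{i+2}`,
`K_{i,1} = J_{i,1} + 2(i+1) g'_{i+1} - 2(i+1)(i+2) f_{i+2}`,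
`K_{i,2} = J_{i,2} + g''_i`.  There is a unique `(f,g)` with
`g_0(0) = g_0'(0) = 0`, `g_1(0) = g_1'(0) = 0` making `K_{i,0} = 0` for all `i`,
`K_{0,1} = 0`, `K_{i,1}(0) = 0` for all `i ≥ 1`, and `K_{0,2} = 0`. -/
theorem statement8 (J : ℕ → ℕ → PowerSeries ℝ) :
    ∃! fg : (ℕ → ℝ) × (ℕ → PowerSeries ℝ),
      (fg.1 0 = 0 ∧ fg.1 1 = 0 ∧
        PowerSeries.constantCoeff (R := ℝ) (fg.2 0) = 0 ∧
        PowerSeries.constantCoeff (R := ℝ) (dy (fg.2 0)) = 0 ∧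
        PowerSeries.constantCoeff (R := ℝ) (fg.2 1) = 0 ∧
        PowerSeries.constantCoeff (R := ℝ) (dy (fg.2 1)) = 0) ∧
      (∀ i : ℕ,
        J i 0 + (((i : ℝ) + 1) * ((i : ℝ) + 2)) • fg.2 (i + 2) = 0) ∧
      (J 0 1 + (2 : ℝ) • dy (fg.2 1) - PowerSeries.C (R := ℝ) (4 * fg.1 2) = 0) ∧
      (∀ i : ℕ, 1 ≤ i →
        PowerSeries.constantCoeff (R := ℝ)
          (J i 1 + (2 * ((i : ℝ) + 1)) • dy (fg.2 (i + 1))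
            - PowerSeries.C (R := ℝ) (2 * ((i : ℝ) + 1) * ((i : ℝ) + 2) * fg.1 (i + 2)))
          = 0) ∧
      (J 0 2 + dy (dy (fg.2 0)) = 0) := by
  have hcoeffG (i : ℕ) : ((i : ℝ) + 1) * ((i : ℝ) + 2) ≠ 0 := by positivity
  have hcoeffF (i : ℕ) : 2 * ((i : ℝ) + 1) * ((i : ℝ) + 2) ≠ 0 := by positivity
  refine ⟨(solutionF J, solutionG J), ?_, ?_⟩
  · obtain ⟨hg0, hg0', hK02⟩ := eq_antideriv_antideriv_neg_iff.mp (rfl : solutionG J 0 = _)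
    obtain ⟨hg1', hK01⟩ := (add_smul_dy_sub_C_eq_zero_iff two_ne_zero).mpr
      ⟨four_mul_solutionF_two J, dy_solutionG_one J⟩
    exact ⟨⟨rfl, rfl, hg0, hg0', (eq_antideriv_iff.mp rfl).1, hg1'⟩,
      fun i => (add_smul_eq_zero_iff_eq_inv_smul_neg (hcoeffG i)).mpr rfl, hK01,
      fun i _ => (constantCoeff_add_smul_dy_sub_C_eq_zero_iff (hcoeffF i)).mpr rfl, hK02⟩
  rintro ⟨f, g⟩ ⟨⟨hf0, hf1, hg0, hg0', hg1, hg1'⟩, hK0, hK01, hK1, hK02⟩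
  obtain ⟨hf2, hdy1⟩ := (add_smul_dy_sub_C_eq_zero_iff two_ne_zero).mp ⟨hg1', hK01⟩
  have hg : g = solutionG J := by
    funext j
    rcases j with _ | _ | i
    · exact eq_antideriv_antideriv_neg_iff.mpr ⟨hg0, hg0', hK02⟩
    · exact eq_antideriv_iff.mpr ⟨hg1, hdy1⟩
    · exact (add_smul_eq_zero_iff_eq_inv_smul_neg (hcoeffG i)).mp (hK0 i)
  subst hg
  have hf : f = solutionF J := by
    funext j
    rcases j with _ | _ | _ | i
    · exact hf0
    · exact hf1
    · linarith [four_mul_solutionF_two J]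
    · exact (constantCoeff_add_smul_dy_sub_C_eq_zero_iff (hcoeffF (i + 1))).mp
        (hK1 (i + 1) i.succ_pos)
  rw [hf]
end

section
/- Let s be a real-analytic function and f₂ a constant. Let (γ₁, γ₂) solve γ₁' = f₂γ₁², γ₂' = s(γ₂)γ₁ with γ₁(0) = x, γ₂(0) = y. Then γ₁(t) = x/(1 − f₂ x t), and for every k ≥ 1 there exists a real-analytic function H_k(λ,μ) such that (d^k/dt^k) γ₂'(t) = H_k(γ₁(t), γ₂(t)) · γ₁(t)^{k+1}; in particular γ₂^{(k+1)}(0) = H_k(x,y) x^{k+1} = O(x^{k+1}). -/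
/-!
Multiplying by `1 - f₂ x t`, the defect `x - (1 - f₂ x t) γ₁ t` solves a linear ODE with zero
initial value, so it vanishes; this gives `γ₁`. For `γ₂`, if `Φ = G(λ, μ) λⁿ` with `n ≥ 1`, then
along the flow `Φ' = (f₂ λ G_λ + s(μ) G_μ + n f₂ G) λⁿ⁺¹`, so one factor of `λ` is gained per
derivative, starting from `γ₂' = s(γ₂) γ₁`.
-/

-- The integrating factor `exp (-∫ c)` turns `F` into a function with zero derivative.
lemma eq_zero_of_hasDerivAt_mul_self {F c : ℝ → ℝ} {t₀ : ℝ} (hc : Continuous c)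
    (hF : ∀ t, HasDerivAt F (c t * F t) t) (h₀ : F t₀ = 0) (t : ℝ) : F t = 0 := by
  set C : ℝ → ℝ := fun t => ∫ u in t₀..t, c u
  have hC : ∀ t, HasDerivAt C (c t) t := fun t => (hc.integral_hasStrictDerivAt t₀ t).hasDerivAt
  have hderiv : ∀ t, HasDerivAt (fun t => Real.exp (-C t) * F t) 0 t := fun t =>
    ((hC t).fun_neg.exp.fun_mul (hF t)).congr_deriv (by ring)
  have hconst := is_const_of_deriv_eq_zero (fun t => (hderiv t).differentiableAt)
    (fun t => (hderiv t).deriv) t t₀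
  simpa [C, h₀, Real.exp_ne_zero] using hconst

lemma eq_div_of_hasDerivAt_mul_sq {γ : ℝ → ℝ} {a : ℝ} (hγ : ∀ t, HasDerivAt γ (a * γ t ^ 2) t)
    (t : ℝ) : γ t = γ 0 / (1 - a * γ 0 * t) := by
  set x := γ 0
  have hF : ∀ t, HasDerivAt (fun t => x - (1 - a * x * t) * γ t)
      (a * γ t * (x - (1 - a * x * t) * γ t)) t := fun t => by
    refine ((((hasDerivAt_id t).const_mul (a * x)).const_sub 1).fun_mul (hγ t)).const_sub x
      |>.congr_deriv ?_
    simp only [id]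
    ring
  have hcont : Continuous fun t => a * γ t :=
    continuous_const.mul (continuous_iff_continuousAt.2 fun t => (hγ t).continuousAt)
  have hkey : ∀ t, (1 - a * x * t) * γ t = x := fun t => by
    linarith [eq_zero_of_hasDerivAt_mul_self hcont hF (t₀ := 0) (by simp [x]) t]
  -- The denominator cannot vanish: at such a `t` the identity above would give `x = 0`.
  have hne : 1 - a * x * t ≠ 0 := by
    intro h
    have hx : x = 0 := by rw [← hkey t, h, zero_mul]
    simp [hx] at h
  rw [eq_div_iff hne, mul_comm, hkey]

/-- For `X = f₂λ²∂_λ + s(μ)λ∂_μ` one has `X(G·λⁿ) = (weightedLieDeriv f₂ s n G)·λⁿ⁺¹`. -/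
noncomputable def weightedLieDeriv (f₂ : ℝ) (s : ℝ → ℝ) (n : ℕ) (G : ℝ × ℝ → ℝ) :
    ℝ × ℝ → ℝ :=
  fun w => f₂ * w.1 * fderiv ℝ G w (1, 0) + s w.2 * fderiv ℝ G w (0, 1) + n * f₂ * G w

lemma analyticAt_fderiv_apply {G : ℝ × ℝ → ℝ} {w : ℝ × ℝ} (hG : AnalyticAt ℝ G w)
    (v : ℝ × ℝ) : AnalyticAt ℝ (fun w => fderiv ℝ G w v) w :=
  ((ContinuousLinearMap.apply ℝ ℝ v).analyticAt _).comp hG.fderiv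

lemma analyticAt_weightedLieDeriv {f₂ : ℝ} {s : ℝ → ℝ} {G : ℝ × ℝ → ℝ} {w : ℝ × ℝ}
    (hs : AnalyticAt ℝ s w.2) (hG : AnalyticAt ℝ G w) (n : ℕ) :
    AnalyticAt ℝ (weightedLieDeriv f₂ s n G) w :=
  ((analyticAt_const.mul analyticAt_fst).mul (analyticAt_fderiv_apply hG _)).add
    ((hs.comp analyticAt_snd).mul (analyticAt_fderiv_apply hG _)) |>.add
    (analyticAt_const.mul hG)

lemma hasDerivAt_mul_pow_of_flow {s : ℝ → ℝ} {f₂ : ℝ} {γ₁ γ₂ : ℝ → ℝ} {G : ℝ × ℝ → ℝ}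
    {t : ℝ} (hode1 : HasDerivAt γ₁ (f₂ * γ₁ t ^ 2) t)
    (hode2 : HasDerivAt γ₂ (s (γ₂ t) * γ₁ t) t) (hG : DifferentiableAt ℝ G (γ₁ t, γ₂ t))
    (n : ℕ) :
    HasDerivAt (fun u => G (γ₁ u, γ₂ u) * γ₁ u ^ (n + 1))
      (weightedLieDeriv f₂ s (n + 1) G (γ₁ t, γ₂ t) * γ₁ t ^ (n + 2)) t := by
  have hcomp := hG.hasFDerivAt.comp_hasDerivAt t (hode1.prodMk hode2)
  have hsplit : ((f₂ * γ₁ t ^ 2, s (γ₂ t) * γ₁ t) : ℝ × ℝ) =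
      (f₂ * γ₁ t ^ 2) • ((1 : ℝ), (0 : ℝ)) + (s (γ₂ t) * γ₁ t) • ((0 : ℝ), (1 : ℝ)) := by
    simp
  rw [hsplit, map_add, map_smul, map_smul, smul_eq_mul, smul_eq_mul] at hcomp
  refine (hcomp.fun_mul (hode1.fun_pow (n + 1))).congr_deriv ?_
  simp only [weightedLieDeriv, Function.comp_apply, Nat.add_sub_cancel]
  push_cast
  ring

lemma exists_iteratedDeriv_deriv_eq_mul_pow {s : ℝ → ℝ} (hs : ∀ z, AnalyticAt ℝ s z) {f₂ : ℝ}
    {γ₁ γ₂ : ℝ → ℝ} (hode1 : ∀ t, HasDerivAt γ₁ (f₂ * γ₁ t ^ 2) t)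
    (hode2 : ∀ t, HasDerivAt γ₂ (s (γ₂ t) * γ₁ t) t) (k : ℕ) :
    ∃ G : ℝ × ℝ → ℝ, (∀ w, AnalyticAt ℝ G w) ∧
      ∀ t, iteratedDeriv k (deriv γ₂) t = G (γ₁ t, γ₂ t) * γ₁ t ^ (k + 1) := by
  induction k with
  | zero => exact ⟨fun w => s w.2, fun w => (hs w.2).comp analyticAt_snd,
      fun t => by simp [(hode2 t).deriv]⟩
  | succ k ih =>
    obtain ⟨G, hGa, hGt⟩ := ih
    refine ⟨weightedLieDeriv f₂ s (k + 1) G,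
      fun w => analyticAt_weightedLieDeriv (hs w.2) (hGa w) _, fun t => ?_⟩
    rw [iteratedDeriv_succ, funext hGt]
    exact (hasDerivAt_mul_pow_of_flow (hode1 t) (hode2 t) (hGa _).differentiableAt k).deriv

/-- for the flow `(γ₁, γ₂)` of the vector field
`X = f₂x²∂_x + s(y)x∂_y` with `s` real-analytic and initial condition `(x,y)`,
one has `γ₁(t) = x/(1 - f₂xt)`, and for every `k ≥ 1` there is a real-analytic
function `H_k(λ,μ)` with `(d^k/dt^k) γ₂'(t) = H_k(γ₁(t), γ₂(t))·γ₁(t)^{k+1}`;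
in particular `γ₂^{(k+1)}(0) = H_k(x,y) x^{k+1} = O(x^{k+1})`. -/
theorem statement16 (s : ℝ → ℝ) (hs : ∀ z : ℝ, AnalyticAt ℝ s z)
    (f₂ x y : ℝ) (γ₁ γ₂ : ℝ → ℝ)
    (h10 : γ₁ 0 = x) (h20 : γ₂ 0 = y)
    (hode1 : ∀ t : ℝ, HasDerivAt γ₁ (f₂ * γ₁ t ^ 2) t)
    (hode2 : ∀ t : ℝ, HasDerivAt γ₂ (s (γ₂ t) * γ₁ t) t) :
    (∀ t : ℝ, γ₁ t = x / (1 - f₂ * x * t)) ∧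
    (∀ k : ℕ, 1 ≤ k → ∃ H : ℝ → ℝ → ℝ,
      (∀ z : ℝ × ℝ, AnalyticAt ℝ (fun w : ℝ × ℝ => H w.1 w.2) z) ∧
      (∀ t : ℝ, iteratedDeriv k (deriv γ₂) t = H (γ₁ t) (γ₂ t) * γ₁ t ^ (k + 1)) ∧
      iteratedDeriv (k + 1) γ₂ 0 = H x y * x ^ (k + 1)) := by
  refine ⟨fun t => h10 ▸ eq_div_of_hasDerivAt_mul_sq hode1 t, fun k _ => ?_⟩
  obtain ⟨G, hGa, hGt⟩ := exists_iteratedDeriv_deriv_eq_mul_pow hs hode1 hode2 k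
  refine ⟨fun l m => G (l, m), hGa, hGt, ?_⟩
  rw [iteratedDeriv_succ', hGt, h10, h20]
end
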